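/- Let F : A ⥤ B be a smothering functor between categories. Then for every object b of B, the fibre of F over b — the category whose objects are the objects a of A with F(a) = b and whose morphisms are the morphisms f of A with F(f) = 𝟙_b (modulo the object equalities) — is nonempty, connected (any two of its objects are joined by a morphism of the fibre), and a groupoid (every morphism of the fibre is an isomorphism in A). -/

import Mathlib

open CategoryTheory Simplicial Opposite MonoidalCategory CartesianMonoidalCategory

universe v₁ v₂ v₃ u₁ u₂ u₃

noncomputable section

/-- The unique non-degenerate `n`-simplex of `Δ[n]` (removed from Mathlib; old meaning). -/
def SSet.standardSimplex.id (n : ℕ) : Δ[n] _⦋n⦌ := SSet.yonedaEquiv (𝟙 Δ[n])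

namespace QCat

/-! ## The internal hom of simplicial sets -/

/-- The internal hom of simplicial sets: an `n`-simplex of `sHom X A` is a map
`X ⊗ Δ[n] ⟶ A`. -/
def sHom (X A : SSet.{0}) : SSet.{0} where
  obj m := (X ⊗ SSet.stdSimplex.obj m.unop) ⟶ A
  map φ := ↾fun g => (X ◁ SSet.stdSimplex.map φ.unop) ≫ g
  map_id m := by ext g : 3; erw [CategoryTheory.Functor.map_id]; simp
  map_comp φ ψ := by
    ext g : 3; rw [unop_comp]; erw [CategoryTheory.Functor.map_comp]
    simp [MonoidalCategory.whiskerLeft_comp]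

/-- constant map of simplicial sets to a standard simplex, at vertex `k` -/
def cnst (Y : SSet.{0}) {n : ℕ} (k : Fin (n+1)) : Y ⟶ Δ[n] where
  app m := ↾fun _ => SSet.stdSimplex.const n k m
  naturality _ _ _ := by
    ext y
    apply (SSet.stdSimplex.objEquiv).injective
    apply SimplexCategory.Hom.ext
    ext x
    rfl

@[simp] lemma comp_cnst {X Y : SSet.{0}} (h : X ⟶ Y) {n : ℕ} (k : Fin (n+1)) :
    h ≫ cnst Y k = cnst X k := rfl

/-- inclusion of `Y` into the cylinder `Y ⊗ Δ[1]` at vertex `i`. -/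
def pt (i : Fin 2) (Y : SSet.{0}) : Y ⟶ Y ⊗ Δ[1] :=
  CartesianMonoidalCategory.lift (𝟙 Y) (cnst Y i)

lemma pt_natural (i : Fin 2) {X Y : SSet.{0}} (h : X ⟶ Y) :
    h ≫ pt i Y = pt i X ≫ (h ▷ Δ[1]) := by
  apply CartesianMonoidalCategory.hom_ext <;> simp [pt]

/-! ## The homotopy category of a simplicial set -/

lemma δ₁σ₀ (X : SSet.{0}) (x : X _⦋0⦌) : X.δ 1 (X.σ 0 x) = x := by
  change (X.σ 0 ≫ X.δ 1) x = x
  rw [SimplicialObject.δ_comp_σ_succ' (X := X) (j := 1) (i := 0) (by decide)]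
  rfl

lemma δ₀σ₀ (X : SSet.{0}) (x : X _⦋0⦌) : X.δ 0 (X.σ 0 x) = x := by
  change (X.σ 0 ≫ X.δ 0) x = x
  rw [SimplicialObject.δ_comp_σ_self' (X := X) (j := 0) (i := 0) (by decide)]
  rfl

lemma app_δ {X Y : SSet.{0}} (u : X ⟶ Y) {n : ℕ} (i : Fin (n+2)) (e : X _⦋n+1⦌) :
    u.app (op ⦋n⦌) (X.δ i e) = Y.δ i (u.app (op ⦋n+1⦌) e) :=
  ConcreteCategory.congr_hom (SimplicialObject.δ_naturality u i) e

lemma app_σ {X Y : SSet.{0}} (u : X ⟶ Y) {n : ℕ} (i : Fin (n+1)) (e : X _⦋n⦌) :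
    u.app (op ⦋n+1⦌) (X.σ i e) = Y.σ i (u.app (op ⦋n⦌) e) :=
  ConcreteCategory.congr_hom (SimplicialObject.σ_naturality u i) e

instance hoQuiver (X : SSet.{0}) : Quiver (X _⦋0⦌) :=
  ⟨fun x y => {e : X _⦋1⦌ // X.δ 1 e = x ∧ X.δ 0 e = y}⟩

/-- The degenerate edge at a vertex, as an arrow of the edge quiver. -/
def degEdge {X : SSet.{0}} (x : X _⦋0⦌) : x ⟶ x :=
  ⟨X.σ 0 x, δ₁σ₀ X x, δ₀σ₀ X x⟩

/-- The relation on the free category on the graph of vertices and edges of a simplicial set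
which is generated by the degenerate edges (which are related to identities) and the
2-simplices (which witness composition relations). -/
inductive HoRel (X : SSet.{0}) :
    ∀ (a b : Paths (X _⦋0⦌)), (a ⟶ b) → (a ⟶ b) → Prop
| id (x : X _⦋0⦌) :
      HoRel X ((Paths.of _).obj x) ((Paths.of _).obj x)
        (Quiver.Hom.toPath (degEdge x)) (𝟙 ((Paths.of _).obj x))
| comp (σ : X _⦋2⦌) (a m b : X _⦋0⦌)
      (h2s : X.δ 1 (X.δ 2 σ) = a) (h2t : X.δ 0 (X.δ 2 σ) = m)
      (h0s : X.δ 1 (X.δ 0 σ) = m) (h0t : X.δ 0 (X.δ 0 σ) = b)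
      (h1s : X.δ 1 (X.δ 1 σ) = a) (h1t : X.δ 0 (X.δ 1 σ) = b) :
      HoRel X ((Paths.of _).obj a) ((Paths.of _).obj b)
        (Quiver.Hom.toPath (⟨X.δ 2 σ, h2s, h2t⟩ : a ⟶ m) ≫
          Quiver.Hom.toPath (⟨X.δ 0 σ, h0s, h0t⟩ : m ⟶ b))
        (Quiver.Hom.toPath ⟨X.δ 1 σ, h1s, h1t⟩)

/-- The quotient category instance on `Quotient (HoRel X)`, made visible to instance search
(which no longer unfolds `HomRel`). -/
instance hoRelQuotientCategory (X : SSet.{0}) : Category.{0} (CategoryTheory.Quotient (HoRel X)) :=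
  CategoryTheory.Quotient.category (HoRel X)

/-- The homotopy category of a simplicial set: the free category on its vertices and
edges, quotiented by the relations generated by degenerate edges and 2-simplices.
This realises the value at `X` of the left adjoint `h` of the nerve functor. -/
def Ho (X : SSet.{0}) : Type := CategoryTheory.Quotient (HoRel X)

instance (X : SSet.{0}) : Category.{0} (Ho X) :=
  CategoryTheory.Quotient.category (HoRel X)

/-- The object of `Ho X` corresponding to a vertex of `X`. -/
def toHo {X : SSet.{0}} (x : X _⦋0⦌) : Ho X := ⟨(Paths.of _).obj x⟩

/-- The morphism of `Ho X` represented by an edge of `X`, with specified endpoints. -/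
def homOfEdge {X : SSet.{0}} (e : X _⦋1⦌) (x y : X _⦋0⦌)
    (hx : X.δ 1 e = x) (hy : X.δ 0 e = y) : toHo x ⟶ toHo y :=
  (Quotient.functor (HoRel X)).map (Quiver.Hom.toPath ⟨e, hx, hy⟩)

lemma homOfEdge_comp {X : SSet.{0}} (σ : X _⦋2⦌) (a m b : X _⦋0⦌)
    (h2s : X.δ 1 (X.δ 2 σ) = a) (h2t : X.δ 0 (X.δ 2 σ) = m)
    (h0s : X.δ 1 (X.δ 0 σ) = m) (h0t : X.δ 0 (X.δ 0 σ) = b)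
    (h1s : X.δ 1 (X.δ 1 σ) = a) (h1t : X.δ 0 (X.δ 1 σ) = b) :
    homOfEdge (X.δ 2 σ) a m h2s h2t ≫ homOfEdge (X.δ 0 σ) m b h0s h0t =
      homOfEdge (X.δ 1 σ) a b h1s h1t := by
  erw [homOfEdge, homOfEdge, homOfEdge, ← Functor.map_comp]
  exact CategoryTheory.Quotient.sound _ (HoRel.comp σ a m b h2s h2t h0s h0t h1s h1t)

lemma homOfEdge_deg {X : SSet.{0}} (x : X _⦋0⦌) :
    homOfEdge (X.σ 0 x) x x (δ₁σ₀ X x) (δ₀σ₀ X x) = 𝟙 (toHo x) := by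
  have h := CategoryTheory.Quotient.sound (HoRel X) (HoRel.id x)
  rw [homOfEdge]
  exact h.trans (CategoryTheory.Functor.map_id _ _)

/-- An edge of a simplicial set is an *isomorphism* if it becomes invertible
in the homotopy category. -/
def IsIsoEdge (X : SSet.{0}) (e : X _⦋1⦌) : Prop :=
  IsIso (homOfEdge e (X.δ 1 e) (X.δ 0 e) rfl rfl)

end QCat

namespace QCat
open CategoryTheory Simplicial Opposite MonoidalCategory CartesianMonoidalCategory

/-! ## Functoriality of the homotopy category -/

/-- The prefunctor on vertices and edges induced by a simplicial map. -/
def edgePre {X Y : SSet.{0}} (u : X ⟶ Y) : Prefunctor (X _⦋0⦌) (Y _⦋0⦌) where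
  obj x := u.app (op ⦋0⦌) x
  map {x y} e := ⟨u.app (op ⦋1⦌) e.1, by rw [← app_δ, e.2.1], by rw [← app_δ, e.2.2]⟩

/-- The functor on homotopy categories induced by a simplicial map. -/
def hoMap {X Y : SSet.{0}} (u : X ⟶ Y) : Ho X ⥤ Ho Y := by
  refine CategoryTheory.Quotient.lift (HoRel X)
    (Paths.lift ((edgePre u).comp
      (Prefunctor.comp (Paths.of _) (Quotient.functor (HoRel Y)).toPrefunctor))) ?_
  intro a b p q h
  induction h with
  | id x =>
    erw [Paths.lift_toPath, CategoryTheory.Functor.map_id]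
    have : (edgePre u).map (degEdge x) = degEdge (u.app (op ⦋0⦌) x) :=
      Subtype.ext (app_σ u 0 x)
    dsimp [Prefunctor.comp]
    erw [this]
    have h := CategoryTheory.Quotient.sound (HoRel Y) (HoRel.id (u.app (op ⦋0⦌) x))
    exact h.trans (CategoryTheory.Functor.map_id _ _)
  | comp σ a m b h2s h2t h0s h0t h1s h1t =>
    erw [Paths.lift_toPath, Functor.map_comp, Paths.lift_toPath, Paths.lift_toPath]
    dsimp [Prefunctor.comp]
    have e2 : (edgePre u).map (⟨X.δ 2 σ, h2s, h2t⟩ : a ⟶ m) =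
        ⟨Y.δ 2 (u.app (op ⦋2⦌) σ), by rw [← app_δ, ← app_δ, h2s]; rfl, by rw [← app_δ, ← app_δ, h2t]; rfl⟩ :=
      Subtype.ext (app_δ u 2 σ)
    have e0 : (edgePre u).map (⟨X.δ 0 σ, h0s, h0t⟩ : m ⟶ b) =
        ⟨Y.δ 0 (u.app (op ⦋2⦌) σ), by rw [← app_δ, ← app_δ, h0s]; rfl, by rw [← app_δ, ← app_δ, h0t]; rfl⟩ :=
      Subtype.ext (app_δ u 0 σ)
    have e1 : (edgePre u).map (⟨X.δ 1 σ, h1s, h1t⟩ : a ⟶ b) =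
        ⟨Y.δ 1 (u.app (op ⦋2⦌) σ), by rw [← app_δ, ← app_δ, h1s]; rfl, by rw [← app_δ, ← app_δ, h1t]; rfl⟩ :=
      Subtype.ext (app_δ u 1 σ)
    erw [e2, e0, e1]
    exact (Functor.map_comp _ _ _).symm.trans <| CategoryTheory.Quotient.sound _
      (HoRel.comp (u.app (op ⦋2⦌) σ) (u.app (op ⦋0⦌) a) (u.app (op ⦋0⦌) m) (u.app (op ⦋0⦌) b)
        (by rw [← app_δ, ← app_δ, h2s]) (by rw [← app_δ, ← app_δ, h2t])
        (by rw [← app_δ, ← app_δ, h0s]) (by rw [← app_δ, ← app_δ, h0t])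
        (by rw [← app_δ, ← app_δ, h1s]) (by rw [← app_δ, ← app_δ, h1t]))

@[simp] lemma hoMap_obj_toHo {X Y : SSet.{0}} (u : X ⟶ Y) (x : X _⦋0⦌) :
    (hoMap u).obj (toHo x) = toHo (u.app (op ⦋0⦌) x) := rfl

lemma hoMap_homOfEdge {X Y : SSet.{0}} (u : X ⟶ Y) (e : X _⦋1⦌) (x y : X _⦋0⦌)
    (hx : X.δ 1 e = x) (hy : X.δ 0 e = y) :
    (hoMap u).map (homOfEdge e x y hx hy) =
      homOfEdge (u.app (op ⦋1⦌) e) (u.app (op ⦋0⦌) x) (u.app (op ⦋0⦌) y)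
        (by rw [← hx, app_δ]) (by rw [← hy, app_δ]) := by
  dsimp only [hoMap, homOfEdge]
  erw [CategoryTheory.Quotient.lift_map_functor_map, Paths.lift_toPath]

end QCat

namespace QCat
open CategoryTheory Simplicial Opposite MonoidalCategory CartesianMonoidalCategory

/-! ## Smothering functors -/

/-- A functor is *smothering* if it is surjective on objects, full, and conservative. -/
structure IsSmothering {C D : Type*} [Category C] [Category D] (F : C ⥤ D) : Prop where
  obj_surj : ∀ d : D, ∃ c : C, F.obj c = d
  full : ∀ {c c' : C} (g : F.obj c ⟶ F.obj c'), ∃ f : c ⟶ c', F.map f = g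
  conservative : ∀ {c c' : C} (f : c ⟶ c'), IsIso (F.map f) → IsIso f

/-! ## Fibrations of simplicial sets -/

/-- A map of simplicial sets is an inner fibration if it has the right lifting property
with respect to all inner horn inclusions. -/
def IsInnerFibration {E B : SSet.{0}} (p : E ⟶ B) : Prop :=
  ∀ ⦃n : ℕ⦄ ⦃i : Fin (n+1)⦄, 0 < i → i < Fin.last n →
    HasLiftingProperty ((SSet.horn n i).ι) p

/-- The free-standing isomorphism: the groupoid with two objects and exactly one
morphism in each hom-set. -/
def WIso : Type := Bool

instance : Groupoid WIso where
  Hom _ _ := PUnit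
  id _ := PUnit.unit
  comp _ _ := PUnit.unit
  inv _ := PUnit.unit

/-- One of the two endpoint inclusions `Δ[0] ⟶ N(I)` into the nerve of the free-standing
isomorphism. -/
def ptWIso : Δ[0] ⟶ nerve WIso :=
  (SSet.yonedaEquiv (X := (nerve WIso)) (n := ⦋0⦌)).symm (ComposableArrows.mk₀ (false : WIso))

/-- An *isofibration* is a map (between quasi-categories) having the right lifting property
with respect to the inner horn inclusions and the endpoint inclusion `Δ[0] ⟶ N(I)`. -/
def IsIsofibration {E B : SSet.{0}} (p : E ⟶ B) : Prop :=
  IsInnerFibration p ∧ HasLiftingProperty ptWIso p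

/-- A *trivial fibration* is a map having the right lifting property with respect to
all boundary inclusions. -/
def IsTrivialFibration {E B : SSet.{0}} (p : E ⟶ B) : Prop :=
  ∀ n : ℕ, HasLiftingProperty ((SSet.boundary n).ι) p

/-! ## Terminal vertices -/

/-- The final vertex of `∂Δ[n+1]`. -/
def lastVtxBdry (n : ℕ) : (∂Δ[n+1] : SSet.{0}) _⦋0⦌ :=
  ⟨SSet.stdSimplex.const (n+1) (Fin.last (n+1)) (op ⦋0⦌), by
    intro h
    obtain ⟨x, hx⟩ := h 0
    have := congrArg Fin.val hx
    simp [SSet.stdSimplex.asOrderHom, Fin.last] at this⟩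

/-- A vertex `t` of a simplicial set `A` is *terminal in Joyal's sense* if every sphere
`∂Δ[n] ⟶ A` (`n ≥ 1`) whose final vertex is `t` can be filled to a simplex `Δ[n] ⟶ A`. -/
def IsTerminalVtx (A : SSet.{0}) (t : A _⦋0⦌) : Prop :=
  ∀ (n : ℕ) (s : (∂Δ[n+1] : SSet.{0}) ⟶ A), s.app (op ⦋0⦌) (lastVtxBdry n) = t →
    ∃ g : Δ[n+1] ⟶ A, (SSet.boundary (n+1)).ι ≫ g = s

end QCat

namespace QCat
open CategoryTheory Simplicial Opposite MonoidalCategory CartesianMonoidalCategory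

/-! ## Yoneda lemmas -/

lemma yE_symm_naturality {B : SSet.{0}} {m m' : SimplexCategoryᵒᵖ} (φ : m ⟶ m') (x : B.obj m) :
    (SSet.yonedaEquiv (X := B) (n := m'.unop)).symm (B.map φ x) =
      SSet.stdSimplex.map φ.unop ≫ (SSet.yonedaEquiv (X := B) (n := m.unop)).symm x := by
  ext k g
  change B.map (g.down).op (B.map φ x) = B.map (g.down ≫ φ.unop).op x
  rw [← FunctorToTypes.map_comp_apply]
  rfl

lemma yE_symm_comp {B B' : SSet.{0}} (r : B ⟶ B') {m : SimplexCategoryᵒᵖ} (x : B.obj m) :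
    (SSet.yonedaEquiv (X := B') (n := m.unop)).symm (r.app m x) =
      (SSet.yonedaEquiv (X := B) (n := m.unop)).symm x ≫ r := by
  ext k g
  exact (NatTrans.naturality_apply r (g.down).op x).symm

end QCat

namespace QCat
open CategoryTheory Simplicial Opposite MonoidalCategory CartesianMonoidalCategory

/-! ## Comma simplicial sets -/

/-- The comma simplicial set `f↓g` of a cospan `f : B ⟶ A`, `g : C ⟶ A`: an `n`-simplex
is a triple `(c, b, α)` where `c` is an `n`-simplex of `C`, `b` is an `n`-simplex of `B`
and `α : Δ[n] ⊗ Δ[1] ⟶ A` restricts at vertex `0` of `Δ[1]` to `f ∘ b` and at vertex `1`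
to `g ∘ c`.  This is a concrete model of the pullback of
`A^{Δ[1]} → A × A` along `g × f : C × B → A × A`. -/
def comma {A B C : SSet.{0}} (f : B ⟶ A) (g : C ⟶ A) : SSet.{0} where
  obj m := {p : (C.obj m × B.obj m) × ((SSet.stdSimplex.obj m.unop ⊗ Δ[1] : SSet.{0}) ⟶ A) //
      pt 0 (SSet.stdSimplex.obj m.unop) ≫ p.2 = (SSet.yonedaEquiv (X := B) (n := m.unop)).symm p.1.2 ≫ f ∧
      pt 1 (SSet.stdSimplex.obj m.unop) ≫ p.2 = (SSet.yonedaEquiv (X := C) (n := m.unop)).symm p.1.1 ≫ g}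
  map φ := ↾fun p => ⟨((C.map φ p.1.1.1, B.map φ p.1.1.2),
      (SSet.stdSimplex.map φ.unop ▷ Δ[1]) ≫ p.1.2), by
        rw [← Category.assoc, ← pt_natural, Category.assoc, p.2.1,
          yE_symm_naturality, Category.assoc], by
        rw [← Category.assoc, ← pt_natural, Category.assoc, p.2.2,
          yE_symm_naturality, Category.assoc]⟩
  map_id m := by
    ext p : 3
    apply Subtype.ext
    refine Prod.ext (Prod.ext ?_ ?_) ?_ <;> simp <;> erw [CategoryTheory.Functor.map_id] <;> simp
  map_comp φ ψ := by
    ext p : 3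
    apply Subtype.ext
    refine Prod.ext (Prod.ext ?_ ?_) ?_ <;> 
      simp [MonoidalCategory.comp_whiskerRight] <;> erw [CategoryTheory.Functor.map_comp,
        MonoidalCategory.comp_whiskerRight, Category.assoc]

/-- The projection `f↓g ⟶ B` (evaluation at the domain). -/
def commaP₀ {A B C : SSet.{0}} (f : B ⟶ A) (g : C ⟶ A) : comma f g ⟶ B where
  app m := ↾fun p => p.1.1.2
  naturality _ _ _ := rfl

/-- The projection `f↓g ⟶ C` (evaluation at the codomain). -/
def commaP₁ {A B C : SSet.{0}} (f : B ⟶ A) (g : C ⟶ A) : comma f g ⟶ C where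
  app m := ↾fun p => p.1.1.1
  naturality _ _ _ := rfl

/-- The map between comma simplicial sets induced by a map of cospans. -/
def commaMap {A B C A' B' C' : SSet.{0}} {f : B ⟶ A} {g : C ⟶ A}
    {f' : B' ⟶ A'} {g' : C' ⟶ A'} (q : A ⟶ A') (r : B ⟶ B') (s : C ⟶ C')
    (hf : f ≫ q = r ≫ f') (hg : g ≫ q = s ≫ g') :
    comma f g ⟶ comma f' g' where
  app m := ↾fun p => ⟨((s.app m p.1.1.1, r.app m p.1.1.2), p.1.2 ≫ q), by
      rw [← Category.assoc, p.2.1, Category.assoc, hf, yE_symm_comp, Category.assoc], by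
      rw [← Category.assoc, p.2.2, Category.assoc, hg, yE_symm_comp, Category.assoc]⟩
  naturality φ ψ := by
    intro ρ
    ext p : 3
    apply Subtype.ext
    refine Prod.ext (Prod.ext ?_ ?_) ?_
    · exact NatTrans.naturality_apply s _ _
    · exact NatTrans.naturality_apply r _ _
    · exact Category.assoc _ _ _

end QCat

namespace QCat
open CategoryTheory Simplicial Opposite MonoidalCategory CartesianMonoidalCategory

/-! ## Adjunctions of quasi-categories -/

/-- An adjunction of quasi-categories `f ⊣ u` between quasi-categories `A` and `B`:
maps `f : B ⟶ A` and `u : A ⟶ B`, a unit `η` (a 1-simplex of `B^B` from the identity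
to `u ∘ f`), a counit `ε` (a 1-simplex of `A^A` from `f ∘ u` to the identity), and
2-simplices `α` of `B^A` and `β` of `A^B` witnessing the two triangle identities. -/
structure QAdj (A B : SSet.{0}) (f : B ⟶ A) (u : A ⟶ B) : Type where
  /-- the unit, a `1`-simplex of `B^B` -/
  η : (B ⊗ Δ[1] : SSet.{0}) ⟶ B
  /-- the counit, a `1`-simplex of `A^A` -/
  ε : (A ⊗ Δ[1] : SSet.{0}) ⟶ A
  η₀ : pt 0 B ≫ η = 𝟙 B
  η₁ : pt 1 B ≫ η = f ≫ u
  ε₀ : pt 0 A ≫ ε = u ≫ f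
  ε₁ : pt 1 A ≫ ε = 𝟙 A
  /-- a `2`-simplex of `B^A` witnessing the triangle identity for `u` -/
  α : (A ⊗ Δ[2] : SSet.{0}) ⟶ B
  /-- a `2`-simplex of `A^B` witnessing the triangle identity for `f` -/
  β : (B ⊗ Δ[2] : SSet.{0}) ⟶ A
  α₂ : (A ◁ SSet.stdSimplex.map (SimplexCategory.δ 2)) ≫ α = (u ▷ Δ[1]) ≫ η
  α₀ : (A ◁ SSet.stdSimplex.map (SimplexCategory.δ 0)) ≫ α = ε ≫ u
  α₁ : (A ◁ SSet.stdSimplex.map (SimplexCategory.δ 1)) ≫ α = fst A Δ[1] ≫ u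
  β₂ : (B ◁ SSet.stdSimplex.map (SimplexCategory.δ 2)) ≫ β = η ≫ f
  β₀ : (B ◁ SSet.stdSimplex.map (SimplexCategory.δ 0)) ≫ β = (f ▷ Δ[1]) ≫ ε
  β₁ : (B ◁ SSet.stdSimplex.map (SimplexCategory.δ 1)) ≫ β = fst B Δ[1] ≫ f

/-- The map `Δ[0] ⟶ A` corresponding to a vertex of `A`. -/
def vMap {A : SSet.{0}} (a : A _⦋0⦌) : Δ[0] ⟶ A :=
  (SSet.yonedaEquiv (X := A) (n := ⦋0⦌)).symm a

end QCat

namespace QCat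
open CategoryTheory Simplicial Opposite MonoidalCategory CartesianMonoidalCategory

/-! ## Strict pullbacks of categories, and pullbacks of simplicial sets -/

/-- The strict pullback of two functors, formed in `Cat`. -/
structure CatPB {A : Type u₁} {B : Type u₂} {C : Type u₃}
    [Category.{v₁} A] [Category.{v₂} B] [Category.{v₃} C]
    (F : B ⥤ A) (G : C ⥤ A) : Type (max u₂ u₃) where
  b : B
  c : C
  w : F.obj b = G.obj c

instance CatPB.category {A : Type u₁} {B : Type u₂} {C : Type u₃}
    [Category.{v₁} A] [Category.{v₂} B] [Category.{v₃} C]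
    (F : B ⥤ A) (G : C ⥤ A) : Category.{max v₂ v₃} (CatPB F G) where
  Hom p q := {φ : (p.b ⟶ q.b) × (p.c ⟶ q.c) //
    F.map φ.1 = eqToHom p.w ≫ G.map φ.2 ≫ eqToHom q.w.symm}
  id p := ⟨(𝟙 p.b, 𝟙 p.c), by
    rw [CategoryTheory.Functor.map_id, CategoryTheory.Functor.map_id]
    simp⟩
  comp φ ψ := ⟨(φ.1.1 ≫ ψ.1.1, φ.1.2 ≫ ψ.1.2), by
    rw [CategoryTheory.Functor.map_comp, CategoryTheory.Functor.map_comp, φ.2, ψ.2]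
    simp⟩
  id_comp φ := by
    apply Subtype.ext
    apply Prod.ext <;> simp
  comp_id φ := by
    apply Subtype.ext
    apply Prod.ext <;> simp
  assoc φ ψ ρ := by
    apply Subtype.ext
    apply Prod.ext <;> simp

/-- The concrete pullback of a cospan of simplicial sets. -/
def sPullback {A B C : SSet.{0}} (f : B ⟶ A) (g : C ⟶ A) : SSet.{0} where
  obj m := {p : B.obj m × C.obj m // f.app m p.1 = g.app m p.2}
  map φ := ↾fun p => ⟨(B.map φ p.1.1, C.map φ p.1.2), by
    rw [NatTrans.naturality_apply f, NatTrans.naturality_apply g, p.2]⟩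
  map_id m := by ext p : 3; apply Subtype.ext; simp
  map_comp φ ψ := by ext p : 3; apply Subtype.ext; simp

end QCat

namespace QCat
open CategoryTheory Simplicial Opposite MonoidalCategory CartesianMonoidalCategory

/-! ## A universal property for `Ho` -/

/-- Construct a functor out of the homotopy category of a simplicial set from a prefunctor
defined on vertices and edges which sends degenerate edges to identities and composites
witnessed by 2-simplices to composites. -/
def hoLift {X : SSet.{0}} {D : Type*} [Category D] (φ : Prefunctor (X _⦋0⦌) D)
    (hid : ∀ x : X _⦋0⦌, φ.map (degEdge x) = 𝟙 (φ.obj x))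
    (hcomp : ∀ (σ : X _⦋2⦌) (a m b : X _⦋0⦌)
      (h2s : X.δ 1 (X.δ 2 σ) = a) (h2t : X.δ 0 (X.δ 2 σ) = m)
      (h0s : X.δ 1 (X.δ 0 σ) = m) (h0t : X.δ 0 (X.δ 0 σ) = b)
      (h1s : X.δ 1 (X.δ 1 σ) = a) (h1t : X.δ 0 (X.δ 1 σ) = b),
      φ.map (⟨X.δ 2 σ, h2s, h2t⟩ : a ⟶ m) ≫ φ.map (⟨X.δ 0 σ, h0s, h0t⟩ : m ⟶ b) =
        φ.map (⟨X.δ 1 σ, h1s, h1t⟩ : a ⟶ b)) :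
    Ho X ⥤ D :=
  CategoryTheory.Quotient.lift _ (Paths.lift φ) (by
    intro a b p q h
    induction h with
    | id x =>
      erw [Paths.lift_toPath, CategoryTheory.Functor.map_id]
      exact hid x
    | comp σ a m b h2s h2t h0s h0t h1s h1t =>
      erw [CategoryTheory.Functor.map_comp, Paths.lift_toPath, Paths.lift_toPath,
        Paths.lift_toPath]
      exact hcomp σ a m b h2s h2t h0s h0t h1s h1t)

@[simp] lemma hoLift_obj_toHo {X : SSet.{0}} {D : Type*} [Category D]
    (φ : Prefunctor (X _⦋0⦌) D) (hid) (hcomp) (x : X _⦋0⦌) :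
    (hoLift φ hid hcomp).obj (toHo x) = φ.obj x := rfl

lemma hoLift_map_homOfEdge {X : SSet.{0}} {D : Type*} [Category D]
    (φ : Prefunctor (X _⦋0⦌) D) (hid) (hcomp) (e : X _⦋1⦌) (x y : X _⦋0⦌)
    (hx : X.δ 1 e = x) (hy : X.δ 0 e = y) :
    (hoLift φ hid hcomp).map (homOfEdge e x y hx hy) = φ.map ⟨e, hx, hy⟩ := by
  dsimp only [hoLift, homOfEdge]
  erw [CategoryTheory.Quotient.lift_map_functor_map, Paths.lift_toPath]
  rfl

lemma homOfEdge_eq {X : SSet.{0}} {e e' : X _⦋1⦌} (h : e = e') {x y x' y' : X _⦋0⦌}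
    (hx : X.δ 1 e = x) (hy : X.δ 0 e = y) (hx' : X.δ 1 e' = x') (hy' : X.δ 0 e' = y')
    (hxx : toHo x = toHo x') (hyy : toHo y = toHo y') :
    homOfEdge e x y hx hy = eqToHom hxx ≫ homOfEdge e' x' y' hx' hy' ≫ eqToHom hyy.symm := by
  subst h
  subst hx hy hx' hy'
  simp

end QCat

namespace QCat
open CategoryTheory Simplicial Opposite MonoidalCategory CartesianMonoidalCategory

/-! ## The comparison functor for pullbacks -/

/-- The canonical comparison prefunctor from the vertices and edges of `B ×_A C` to the
strict pullback of homotopy categories. -/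
def cmpPBPre {A B C : SSet.{0}} (f : B ⟶ A) (g : C ⟶ A) :
    Prefunctor ((sPullback f g) _⦋0⦌) (CatPB (hoMap f) (hoMap g)) where
  obj p := ⟨toHo p.1.1, toHo p.1.2, congrArg toHo p.2⟩
  map {p q} E :=
    ⟨(homOfEdge E.1.1.1 p.1.1 q.1.1
        (congrArg (fun z => z.1.1) E.2.1) (congrArg (fun z => z.1.1) E.2.2),
      homOfEdge E.1.1.2 p.1.2 q.1.2
        (congrArg (fun z => z.1.2) E.2.1) (congrArg (fun z => z.1.2) E.2.2)), by
      erw [hoMap_homOfEdge, hoMap_homOfEdge]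
      exact homOfEdge_eq E.1.2 _ _ _ _ (congrArg toHo p.2) (congrArg toHo q.2)
      all_goals try exact congrArg (fun z => z.1.1) E.2.1
      all_goals try exact congrArg (fun z => z.1.1) E.2.2
      all_goals try exact congrArg (fun z => z.1.2) E.2.1
      all_goals try exact congrArg (fun z => z.1.2) E.2.2⟩

/-- The canonical comparison functor `h(B ×_A C) ⥤ hB ×_{hA} hC`. -/
def cmpPB {A B C : SSet.{0}} (f : B ⟶ A) (g : C ⟶ A) :
    Ho (sPullback f g) ⥤ CatPB (hoMap f) (hoMap g) :=
  hoLift (cmpPBPre f g)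
    (fun p => by
      apply Subtype.ext
      apply Prod.ext
      · exact homOfEdge_deg p.1.1
      · exact homOfEdge_deg p.1.2)
    (fun σ a m b h2s h2t h0s h0t h1s h1t => by
      apply Subtype.ext
      apply Prod.ext
      · exact homOfEdge_comp σ.1.1 a.1.1 m.1.1 b.1.1
          (congrArg (fun z => z.1.1) h2s) (congrArg (fun z => z.1.1) h2t)
          (congrArg (fun z => z.1.1) h0s) (congrArg (fun z => z.1.1) h0t)
          (congrArg (fun z => z.1.1) h1s) (congrArg (fun z => z.1.1) h1t)
      · exact homOfEdge_comp σ.1.2 a.1.2 m.1.2 b.1.2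
          (congrArg (fun z => z.1.2) h2s) (congrArg (fun z => z.1.2) h2t)
          (congrArg (fun z => z.1.2) h0s) (congrArg (fun z => z.1.2) h0t)
          (congrArg (fun z => z.1.2) h1s) (congrArg (fun z => z.1.2) h1t))

end QCat

namespace QCat
open CategoryTheory Simplicial Opposite MonoidalCategory CartesianMonoidalCategory

/-! ## Evaluation of simplices of internal homs -/

/-- The edge of `A` obtained by evaluating a `1`-simplex of `A^X` at a vertex of `X`. -/
def evalEdge {X A : SSet.{0}} (k : (X ⊗ Δ[1] : SSet.{0}) ⟶ A) (x : X _⦋0⦌) : A _⦋1⦌ :=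
  k.app (op ⦋1⦌) (X.σ 0 x, SSet.standardSimplex.id 1)

/-- The generic `m`-simplex of the standard simplex `Δ[m]`. -/
def genSimp (m : SimplexCategoryᵒᵖ) : (SSet.stdSimplex.obj m.unop).obj m :=
  (SSet.stdSimplex.objEquiv (n := m.unop) (m := m)).symm (𝟙 m.unop)

lemma ptΔ_eq {n : ℕ} (x y : Δ[n] _⦋0⦌) (h : (SSet.stdSimplex.asOrderHom x) 0 = (SSet.stdSimplex.asOrderHom y) 0) :
    x = y := by
  apply (SSet.stdSimplex.objEquiv).injective
  apply SimplexCategory.Hom.ext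
  apply OrderHom.ext
  funext i
  fin_cases i
  exact h

lemma map_const {n : ℕ} (k : Fin (n+1)) {m m' : SimplexCategoryᵒᵖ} (φ : m ⟶ m') :
    Δ[n].map φ (SSet.stdSimplex.const n k m) = SSet.stdSimplex.const n k m' := by
  apply (SSet.stdSimplex.objEquiv).injective
  apply SimplexCategory.Hom.ext
  apply OrderHom.ext
  funext i
  rfl

/-- Evaluation of `A^{Δ[1]}` at a vertex of the exponent `Δ[1]`. -/
def evV {A : SSet.{0}} (i : Fin 2) : sHom Δ[1] A ⟶ A where
  app m := ↾fun k => k.app m (SSet.stdSimplex.const 1 i m, genSimp m)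
  naturality {m m'} φ := by
    ext k
    change (k.app m' _ : A.obj m') = A.map φ (k.app m _)
    erw [← NatTrans.naturality_apply k φ]
    congr 1

end QCat

namespace QCat
open CategoryTheory Simplicial Opposite MonoidalCategory CartesianMonoidalCategory

/-! ## Functors into arrow and comma categories from natural transformations -/

/-- The functor into the arrow category determined by a natural transformation. -/
def toArrowFunctor {C D : Type*} [Category C] [Category D] {F G : C ⥤ D} (ν : F ⟶ G) :
    C ⥤ Arrow D where
  obj c := Arrow.mk (ν.app c)
  map {c c'} φ := Arrow.homMk (u := F.map φ) (v := G.map φ) (ν.naturality φ)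
  map_id c := by
    apply CommaMorphism.ext <;> simp
  map_comp φ ψ := by
    apply CommaMorphism.ext <;> simp

/-- The functor into a comma category determined by a natural transformation. -/
def toCommaFunctor {C D E T : Type*} [Category C] [Category D] [Category E] [Category T]
    {L : D ⥤ T} {R : E ⥤ T} {P : C ⥤ D} {Q : C ⥤ E} (ν : P ⋙ L ⟶ Q ⋙ R) :
    C ⥤ Comma L R where
  obj c := ⟨P.obj c, Q.obj c, ν.app c⟩
  map {c c'} φ := ⟨P.map φ, Q.map φ, ν.naturality φ⟩
  map_id c := by
    apply CommaMorphism.ext <;> simp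
  map_comp φ ψ := by
    apply CommaMorphism.ext <;> simp

end QCat

namespace QCat
open CategoryTheory Simplicial Opposite MonoidalCategory CartesianMonoidalCategory

/-! ## Pre- and post-composition on internal homs -/

/-- Postcomposition map on internal homs. -/
def postW (X : SSet.{0}) {B A : SSet.{0}} (p : B ⟶ A) : sHom X B ⟶ sHom X A where
  app m := ↾fun g => g ≫ p
  naturality {m m'} φ := by
    ext g
    show ((X ◁ SSet.stdSimplex.map φ.unop) ≫ g) ≫ p =
      (X ◁ SSet.stdSimplex.map φ.unop) ≫ (g ≫ p)
    erw [Category.assoc]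

/-- Precomposition map on internal homs. -/
def preW {A B : SSet.{0}} (w : A ⟶ B) (C : SSet.{0}) : sHom B C ⟶ sHom A C where
  app m := ↾fun g => (w ▷ SSet.stdSimplex.obj m.unop) ≫ g
  naturality {m m'} φ := by
    ext g
    show (w ▷ SSet.stdSimplex.obj m'.unop) ≫ ((B ◁ SSet.stdSimplex.map φ.unop) ≫ g) =
      (A ◁ SSet.stdSimplex.map φ.unop) ≫ ((w ▷ SSet.stdSimplex.obj m.unop) ≫ g)
    exact (Category.assoc _ _ _).symm.trans
      (((whisker_exchange w (SSet.stdSimplex.map φ.unop)).symm =≫ g).trans (Category.assoc _ _ _))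

end QCat

namespace QCat
open CategoryTheory Simplicial Opposite MonoidalCategory CartesianMonoidalCategory

/-! ## Distinguished vertices of comma quasi-categories -/

/-- The vertex of the comma quasi-category `f↓a` determined by the vertex `u(a)` together
with the `1`-simplex `ε ∘ (a × Δ[1]) : f(u(a)) → a`, the component of the counit at `a`. -/
def counitVtx {A B : SSet.{0}} {f : B ⟶ A} {u : A ⟶ B} (adj : QAdj A B f u) (a : A _⦋0⦌) :
    (comma f (vMap a)) _⦋0⦌ :=
  ⟨((SSet.standardSimplex.id 0, u.app (op ⦋0⦌) a), (vMap a ▷ Δ[1]) ≫ adj.ε), by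
    constructor
    · rw [← Category.assoc, ← pt_natural, Category.assoc, adj.ε₀]
      show _ = (SSet.yonedaEquiv (X := B) (n := ⦋0⦌)).symm (u.app (op ⦋0⦌) a) ≫ f
      rw [yE_symm_comp u a, Category.assoc]
      rfl
    · rw [← Category.assoc, ← pt_natural, Category.assoc, adj.ε₁, Category.comp_id]
      show vMap a = (SSet.yonedaEquiv (X := Δ[0]) (n := ⦋0⦌)).symm (SSet.standardSimplex.id 0) ≫ vMap a
      rw [SSet.standardSimplex.id, Equiv.symm_apply_apply, Category.id_comp]⟩

/-- The vertex of the comma quasi-category `A↓a` determined by the vertex `a` together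
with the degenerate `1`-simplex at `a`. -/
def idVtx {A : SSet.{0}} (a : A _⦋0⦌) : (comma (𝟙 A) (vMap a)) _⦋0⦌ :=
  ⟨((SSet.standardSimplex.id 0, a), fst Δ[0] Δ[1] ≫ vMap a), by
    constructor
    · rw [← Category.assoc]
      show (𝟙 _) ≫ vMap a = (SSet.yonedaEquiv (X := A) (n := ⦋0⦌)).symm a ≫ 𝟙 A
      rw [Category.id_comp, Category.comp_id]
      rfl
    · rw [← Category.assoc]
      show (𝟙 _) ≫ vMap a = (SSet.yonedaEquiv (X := Δ[0]) (n := ⦋0⦌)).symm (SSet.standardSimplex.id 0) ≫ vMap a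
      rw [Category.id_comp, SSet.standardSimplex.id, Equiv.symm_apply_apply, Category.id_comp]⟩

/-! ## Fibred equivalences between `f↓A` and `B↓u` -/

/-- The data of an equivalence, fibred over `A × B`, between the comma quasi-categories
`f↓A` and `B↓u`. -/
structure CommaEquivFibred {A B : SSet.{0}} (f : B ⟶ A) (u : A ⟶ B) : Type where
  /-- a map `B↓u ⟶ f↓A` over `A × B` -/
  w : comma (𝟙 B) u ⟶ comma f (𝟙 A)
  /-- a map `f↓A ⟶ B↓u` over `A × B` -/
  w' : comma f (𝟙 A) ⟶ comma (𝟙 B) u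
  hw₁ : w ≫ commaP₁ f (𝟙 A) = commaP₁ (𝟙 B) u
  hw₀ : w ≫ commaP₀ f (𝟙 A) = commaP₀ (𝟙 B) u
  hw'₁ : w' ≫ commaP₁ (𝟙 B) u = commaP₁ f (𝟙 A)
  hw'₀ : w' ≫ commaP₀ (𝟙 B) u = commaP₀ f (𝟙 A)
  /-- a `1`-simplex of `(f↓A)^{f↓A}` whose two vertices are `w ∘ w'` and the identity -/
  H : (comma f (𝟙 A) ⊗ Δ[1] : SSet.{0}) ⟶ comma f (𝟙 A)
  hH : (pt 0 _ ≫ H = w' ≫ w ∧ pt 1 _ ≫ H = 𝟙 _) ∨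
       (pt 0 _ ≫ H = 𝟙 _ ∧ pt 1 _ ≫ H = w' ≫ w)
  hHiso : IsIsoEdge (sHom (comma f (𝟙 A)) (comma f (𝟙 A))) H
  hH₁ : H ≫ commaP₁ f (𝟙 A) = fst _ _ ≫ commaP₁ f (𝟙 A)
  hH₀ : H ≫ commaP₀ f (𝟙 A) = fst _ _ ≫ commaP₀ f (𝟙 A)
  /-- a `1`-simplex of `(B↓u)^{B↓u}` whose two vertices are `w' ∘ w` and the identity -/
  K : (comma (𝟙 B) u ⊗ Δ[1] : SSet.{0}) ⟶ comma (𝟙 B) u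
  hK : (pt 0 _ ≫ K = w ≫ w' ∧ pt 1 _ ≫ K = 𝟙 _) ∨
       (pt 0 _ ≫ K = 𝟙 _ ∧ pt 1 _ ≫ K = w ≫ w')
  hKiso : IsIsoEdge (sHom (comma (𝟙 B) u) (comma (𝟙 B) u)) K
  hK₁ : K ≫ commaP₁ (𝟙 B) u = fst _ _ ≫ commaP₁ (𝟙 B) u
  hK₀ : K ≫ commaP₀ (𝟙 B) u = fst _ _ ≫ commaP₀ (𝟙 B) u

end QCat

namespace QCat
open CategoryTheory Simplicial Opposite MonoidalCategory CartesianMonoidalCategory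

/-- Each fibre of a smothering functor is a nonempty connected groupoid. -/
theorem statement1 {A B : Type*} [Category A] [Category B] (F : A ⥤ B)
    (hF : IsSmothering F) (b : B) :
    (∃ a : A, F.obj a = b) ∧
    (∀ (a a' : A) (ha : F.obj a = b) (ha' : F.obj a' = b),
      ∃ f : a ⟶ a', F.map f = eqToHom (ha.trans ha'.symm)) ∧
    (∀ (a a' : A) (ha : F.obj a = b) (ha' : F.obj a' = b) (f : a ⟶ a'),
      F.map f = eqToHom (ha.trans ha'.symm) → IsIso f) :=
  ⟨hF.obj_surj b, fun _ _ ha ha' => hF.full (eqToHom (ha.trans ha'.symm)),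
    fun _ _ _ _ f hf => hF.conservative f (hf ▸ inferInstance)⟩
end QCat
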